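/- Let $n \ge 3$, $d \ge 2$, $l \in \{2,\dots,d\}$, $k \in \{3,\dots,n\}$, and let $X \in \mathbb{R}^{n \times d}$ be the Case-1 matrix with rows $X_1 = -\tfrac{1}{\sqrt{2}} e_1 + \tfrac{1}{\sqrt{2}} e_l$, $X_k = e_1$, and $X_i = \tfrac{1}{\sqrt{2}} e_1 + \tfrac{1}{\sqrt{2}} e_l$ for all $i \in \{2,\dots,n\} \setminus \{k\}$. Let $0 < \varepsilon < 0.01$ and let $\bar{w} \in \mathbb{R}^d$ satisfy $\max_{i \in \{1,\dots,n\}} \|\bar{w} - X_i\|^2 \le \tfrac{2+\sqrt{2}}{4} + \varepsilon$. Then $\left|\bar{w}_1 - \left(\tfrac{1}{2} - \tfrac{\sqrt{2}}{4}\right)\right| < 0.1$, $\left|\bar{w}_l - \tfrac{\sqrt{2}}{4}\right| < 0.1$, and $|\bar{w}_j| < 0.1$ for all $j \notin \{1, l\}$; consequently $\bar{w}_j < \tfrac{3\sqrt{2}}{8}$ for every $j \in \{2,\dots,d\}$, and $\bar{w}_j < \bar{w}_l$ for every $j \in \{2,\dots,d\}$ with $j \ne l$. -/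

import Mathlib

open Finset

lemma euclid_norm_sq_eq {d : ℕ} (x : EuclideanSpace ℝ (Fin d)) :
    ‖x‖ ^ 2 = ∑ j, x j ^ 2 := by
  rw [EuclideanSpace.norm_eq, Real.sq_sqrt (by positivity)]
  simp [sq_abs]


lemma meb_pair_bound (s eps u v : ℝ) (hs2 : s * s = 1 / 2)
    (hpair : (u + s) ^ 2 + (u - 1) ^ 2 + ((v - s) ^ 2 + v ^ 2) ≤ 1 + s + 2 * eps) :
    (u - (1 / 2 - s / 2)) ^ 2 ≤ eps ∧ (v - s / 2) ^ 2 ≤ eps := by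
  constructor
  · nlinarith [sq_nonneg (v - s / 2)]
  · nlinarith [sq_nonneg (u - (1 / 2 - s / 2))]

lemma meb_trip_bound (s eps u v t : ℝ) (hs2 : s * s = 1 / 2)
    (htrip : (u + s) ^ 2 + (u - 1) ^ 2 + ((v - s) ^ 2 + v ^ 2) + (t ^ 2 + t ^ 2)
      ≤ 1 + s + 2 * eps) :
    t ^ 2 ≤ eps := by
  nlinarith [sq_nonneg (u - (1 / 2 - s / 2)), sq_nonneg (v - s / 2)]

set_option maxHeartbeats 1000000 in
/-- Decoding step of the minimum-enclosing-ball lower bound, Case 1: any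
`ε`-approximate center has all coordinates in `{2,…,d}` below `3√2/8`, and its
largest such coordinate reveals the hidden column index `l`. -/
theorem case1_meb_decoding (n d : ℕ) (hn : 3 ≤ n) (hd : 2 ≤ d)
    (l : Fin d) (hl : (l : ℕ) ≠ 0)
    (k : Fin n) (hk : 2 ≤ (k : ℕ))
    (X : Fin n → EuclideanSpace ℝ (Fin d))
    (hX1 : ∀ i : Fin n, (i : ℕ) = 0 →
      X i = -((Real.sqrt 2)⁻¹ • EuclideanSpace.single (⟨0, by omega⟩ : Fin d) (1 : ℝ))
        + (Real.sqrt 2)⁻¹ • EuclideanSpace.single l (1 : ℝ))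
    (hXk : X k = EuclideanSpace.single (⟨0, by omega⟩ : Fin d) (1 : ℝ))
    (hXi : ∀ i : Fin n, (i : ℕ) ≠ 0 → i ≠ k →
      X i = (Real.sqrt 2)⁻¹ • EuclideanSpace.single (⟨0, by omega⟩ : Fin d) (1 : ℝ)
        + (Real.sqrt 2)⁻¹ • EuclideanSpace.single l (1 : ℝ))
    (ε : ℝ) (hε0 : 0 < ε) (hε1 : ε < 0.01)
    (wbar : EuclideanSpace ℝ (Fin d))
    (happrox : ∀ i : Fin n, ‖wbar - X i‖ ^ 2 ≤ (2 + Real.sqrt 2) / 4 + ε) :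
    |wbar (⟨0, by omega⟩ : Fin d) - (1 / 2 - Real.sqrt 2 / 4)| < 0.1
      ∧ |wbar l - Real.sqrt 2 / 4| < 0.1
      ∧ (∀ j : Fin d, (j : ℕ) ≠ 0 → j ≠ l → |wbar j| < 0.1)
      ∧ (∀ j : Fin d, (j : ℕ) ≠ 0 → wbar j < 3 * Real.sqrt 2 / 8)
      ∧ (∀ j : Fin d, (j : ℕ) ≠ 0 → j ≠ l → wbar j < wbar l) := by
  have hsqrt2 : Real.sqrt 2 * Real.sqrt 2 = 2 := Real.mul_self_sqrt (by norm_num)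
  have hsnn : (0:ℝ) ≤ Real.sqrt 2 := Real.sqrt_nonneg 2
  have h14 : (1.4:ℝ) < Real.sqrt 2 := by nlinarith
  have h15 : Real.sqrt 2 < 1.5 := by nlinarith
  set s : ℝ := (Real.sqrt 2)⁻¹ with hs
  have hsval : Real.sqrt 2 = 2 * s := by
    rw [hs]; field_simp; exact Real.sq_sqrt (by norm_num)
  have hs2 : s * s = 1 / 2 := by
    rw [hs, ← mul_inv, hsqrt2]; norm_num
  set j0 : Fin d := ⟨0, by omega⟩ with hj0
  set i0 : Fin n := ⟨0, by omega⟩ with hi0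
  have hne : j0 ≠ l := by simp [hj0, Fin.ext_iff]; omega
  have ha := hX1 i0 rfl
  have hA0 : (wbar - X i0) j0 = wbar j0 + s := by
    rw [ha]
    simp [PiLp.sub_apply, PiLp.add_apply, PiLp.neg_apply, PiLp.smul_apply,
      EuclideanSpace.single_apply, hne]
  have hAl : (wbar - X i0) l = wbar l - s := by
    rw [ha]
    simp [PiLp.sub_apply, PiLp.add_apply, PiLp.neg_apply, PiLp.smul_apply,
      EuclideanSpace.single_apply, hne.symm]
  have hAj : ∀ j : Fin d, j ≠ j0 → j ≠ l → (wbar - X i0) j = wbar j := by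
    intro j h1 h2
    rw [ha]
    simp [PiLp.sub_apply, PiLp.add_apply, PiLp.neg_apply, PiLp.smul_apply,
      EuclideanSpace.single_apply, h1, h2]
  have hB0 : (wbar - X k) j0 = wbar j0 - 1 := by
    rw [hXk]; simp [PiLp.sub_apply, EuclideanSpace.single_apply]
  have hBl : (wbar - X k) l = wbar l := by
    rw [hXk]; simp [PiLp.sub_apply, EuclideanSpace.single_apply, hne.symm]
  have hBj : ∀ j : Fin d, j ≠ j0 → (wbar - X k) j = wbar j := by
    intro j h1
    rw [hXk]; simp [PiLp.sub_apply, EuclideanSpace.single_apply, h1]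
  have h1 : ∑ j, (wbar - X i0) j ^ 2 ≤ (2 + Real.sqrt 2) / 4 + ε := by
    rw [← euclid_norm_sq_eq]; exact happrox i0
  have h2 : ∑ j, (wbar - X k) j ^ 2 ≤ (2 + Real.sqrt 2) / 4 + ε := by
    rw [← euclid_norm_sq_eq]; exact happrox k
  have hFle : ∑ j, ((wbar - X i0) j ^ 2 + (wbar - X k) j ^ 2) ≤ 1 + s + 2 * ε := by
    rw [Finset.sum_add_distrib]
    have : (2 + Real.sqrt 2) / 4 + ε + ((2 + Real.sqrt 2) / 4 + ε) = 1 + s + 2 * ε := by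
      rw [hsval]; ring
    linarith [h1, h2]
  have hpair : (wbar j0 + s) ^ 2 + (wbar j0 - 1) ^ 2 + ((wbar l - s) ^ 2 + wbar l ^ 2)
      ≤ 1 + s + 2 * ε := by
    have hsub : ∑ j ∈ ({j0, l} : Finset (Fin d)),
        ((wbar - X i0) j ^ 2 + (wbar - X k) j ^ 2)
        ≤ ∑ j, ((wbar - X i0) j ^ 2 + (wbar - X k) j ^ 2) :=
      Finset.sum_le_sum_of_subset_of_nonneg (Finset.subset_univ _)
        (fun _ _ _ => by positivity)
    rw [Finset.sum_pair hne, hA0, hAl, hB0, hBl] at hsub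
    linarith
  obtain ⟨claim1, claim2⟩ := meb_pair_bound s ε (wbar j0) (wbar l) hs2 hpair
  have claim3 : ∀ j : Fin d, j ≠ j0 → j ≠ l → wbar j ^ 2 ≤ ε := by
    intro j hj1 hj2
    have htrip : (wbar j0 + s) ^ 2 + (wbar j0 - 1) ^ 2 + ((wbar l - s) ^ 2 + wbar l ^ 2)
        + (wbar j ^ 2 + wbar j ^ 2) ≤ 1 + s + 2 * ε := by
      have hsub : ∑ j' ∈ ({j0, l, j} : Finset (Fin d)),
          ((wbar - X i0) j' ^ 2 + (wbar - X k) j' ^ 2)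
          ≤ ∑ j', ((wbar - X i0) j' ^ 2 + (wbar - X k) j' ^ 2) :=
        Finset.sum_le_sum_of_subset_of_nonneg (Finset.subset_univ _)
          (fun _ _ _ => by positivity)
      rw [Finset.sum_insert (by simp [hne, hj1.symm]),
        Finset.sum_pair (Ne.symm hj2), hA0, hAl, hB0, hBl,
        hAj j hj1 hj2, hBj j hj1] at hsub
      linarith
    exact meb_trip_bound s ε (wbar j0) (wbar l) (wbar j) hs2 htrip
  clear happrox hX1 hXk hXi ha hA0 hAl hAj hB0 hBl hBj h1 h2 hFle hpair
  clear X
  have hgl : |wbar l - Real.sqrt 2 / 4| < 0.1 := by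
    rw [hsval, abs_lt]
    generalize wbar l = v at claim2 ⊢
    constructor <;> nlinarith [claim2]
  refine ⟨?_, hgl, ?_, ?_, ?_⟩
  · rw [hsval, abs_lt]
    generalize wbar j0 = u at claim1 ⊢
    constructor <;> nlinarith [claim1]
  · intro j hj1 hj2
    have hj0' : j ≠ j0 := by simp [hj0, Fin.ext_iff]; omega
    have h3 := claim3 j hj0' hj2
    rw [abs_lt]
    generalize wbar j = t at h3 ⊢
    constructor <;> nlinarith [h3]
  · intro j hj1
    rw [hsval]
    by_cases hjl : j = l
    · subst hjl
      generalize wbar j = v at claim2 ⊢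
      nlinarith [claim2]
    · have hj0' : j ≠ j0 := by simp [hj0, Fin.ext_iff]; omega
      have h3 := claim3 j hj0' hjl
      generalize wbar j = t at h3 ⊢
      nlinarith [h3]
  · intro j hj1 hj2
    have hj0' : j ≠ j0 := by simp [hj0, Fin.ext_iff]; omega
    have h3 := claim3 j hj0' hj2
    generalize wbar j = t at h3 ⊢
    generalize wbar l = v at claim2 ⊢
    nlinarith [h3, claim2, sq_nonneg (t - 0.1), sq_nonneg (v - s / 2 + 0.1)]
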